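/- Let G be the transformed graph of a temporal graph, let a, b ∈ 𝒱 and t_α ≤ t_ω, suppose {t ∈ T_out(a) : t ≥ t_α} ≠ ∅, and let t_o = min{t ∈ T_out(a) : t ≥ t_α}. Then: (1) P(a, b, [t_α, t_ω]) ≠ ∅ if and only if the set R = {t' ∈ T_in(b) : t' ≤ t_ω and out(a, t_o) →_G in(b, t')} is nonempty; and (2) if these sets are nonempty, then the earliest-arrival time min{end(P) : P ∈ P(a, b, [t_α, t_ω])} equals min R. -/

import Mathlib

/-- A copy of an original vertex: `inn v t` is the vertex `in(v, t)` and
`out v t` is the vertex `out(v, t)` of the transformed graph. -/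
inductive Copy (V : Type*) where
  | inn : V → ℕ → Copy V
  | out : V → ℕ → Copy V

/-- The original vertex of which a vertex of the transformed graph is a copy. -/
def Copy.base {V : Type*} : Copy V → V
  | .inn v _ => v
  | .out v _ => v

/-- The time stamp of a vertex of the transformed graph. -/
def Copy.time {V : Type*} : Copy V → ℕ
  | .inn _ t => t
  | .out _ t => t

/-- `T_in(v)`: the set of arrival times of in-edges of `v`. -/
def Tin {V : Type*} (E : Finset (V × V × ℕ × ℕ)) (v : V) : Set ℕ :=
  {s | ∃ u t l, (u, v, t, l) ∈ E ∧ s = t + l}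

/-- `T_out(v)`: the set of starting times of out-edges of `v`. -/
def Tout {V : Type*} (E : Finset (V × V × ℕ × ℕ)) (v : V) : Set ℕ :=
  {t | ∃ u l, (v, u, t, l) ∈ E}

/-- The edge relation of the transformed graph `G` of the temporal graph with
temporal edge set `E`. -/
inductive GEdge {V : Type*} (E : Finset (V × V × ℕ × ℕ)) : Copy V → Copy V → Prop where
  | in_in {v : V} {t t' : ℕ} : t ∈ Tin E v → t' ∈ Tin E v → t < t' →
      (∀ s ∈ Tin E v, s ≤ t ∨ t' ≤ s) → GEdge E (.inn v t) (.inn v t')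
  | out_out {v : V} {t t' : ℕ} : t ∈ Tout E v → t' ∈ Tout E v → t < t' →
      (∀ s ∈ Tout E v, s ≤ t ∨ t' ≤ s) → GEdge E (.out v t) (.out v t')
  | in_out {v : V} {t s : ℕ} : t ∈ Tin E v → s ∈ Tout E v → t ≤ s →
      (∀ s' ∈ Tout E v, t ≤ s' → s ≤ s') →
      (∀ t' ∈ Tin E v, t' ≤ s → t' ≤ t) →
      GEdge E (.inn v t) (.out v s)
  | cross {u v : V} {t l : ℕ} : (u, v, t, l) ∈ E → GEdge E (.out u t) (.inn v (t + l))

/-- Membership in the vertex set of the transformed graph. -/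
def IsVert {V : Type*} (E : Finset (V × V × ℕ × ℕ)) : Copy V → Prop
  | .inn v t => t ∈ Tin E v
  | .out v t => t ∈ Tout E v

/-- Consecutive-edge condition for a temporal path: the head vertex of the next
edge is the tail vertex of the current one, and `t_i + λ_i ≤ t_{i+1}`. -/
def StepOK {V : Type*} (e f : V × V × ℕ × ℕ) : Prop :=
  e.2.1 = f.1 ∧ e.2.2.1 + e.2.2.2 ≤ f.2.2.1

/-- `P` is a temporal path from `a` to `b` in the temporal graph with
temporal edge set `E`. -/
def IsTempPath {V : Type*} (E : Finset (V × V × ℕ × ℕ)) (a b : V)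
    (P : List (V × V × ℕ × ℕ)) : Prop :=
  P ≠ [] ∧ (∀ e ∈ P, e ∈ E) ∧ List.Chain' StepOK P ∧
    (P.head?.map fun e => e.1) = some a ∧ (P.getLast?.map fun e => e.2.1) = some b

/-- The starting time `start(P)` of a (nonempty) temporal path. -/
def startT {V : Type*} (P : List (V × V × ℕ × ℕ)) : ℕ :=
  (P.head?.map fun e => e.2.2.1).getD 0

/-- The ending time `end(P)` of a (nonempty) temporal path. -/
def endT {V : Type*} (P : List (V × V × ℕ × ℕ)) : ℕ :=
  (P.getLast?.map fun e => e.2.2.1 + e.2.2.2).getD 0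

/-- The duration `dura(P) = end(P) - start(P)` of a temporal path. -/
def duraT {V : Type*} (P : List (V × V × ℕ × ℕ)) : ℕ := endT P - startT P

/-! Every temporal path is traced in `G`: each temporal edge `(u, v, t, λ)` is the cross edge
`out(u, t) → in(v, t + λ)`, and a wait at `v` from an arrival `t` to a later departure `s` is a
walk `in(v, t) →* out(v, s)`, since the copies of `v` form two time-ordered chains joined at the
first departure after each arrival. The walk starts at `out(a, t_o)` because `t_o` is the first
admissible departure from `a`. Conversely, edges of `G` never go back in time and only cross edges
change the vertex, so the cross edges of a walk `out(a, t_o) →* in(b, t')` form a temporal path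
leaving `a` no earlier than `t_o` and arriving at `b` by `t'`. Thus admissible arrival times lie
in `R` and every element of `R` dominates one, which gives both claims. -/

open Relation

theorem reflTransGen_of_consecutive {α : Type*} {r : α → α → Prop} {S : Set ℕ} {f : ℕ → α}
    (h : ∀ t ∈ S, ∀ t' ∈ S, t < t' → (∀ s ∈ S, s ≤ t ∨ t' ≤ s) → r (f t) (f t'))
    {t t' : ℕ} (ht : t ∈ S) (ht' : t' ∈ S) (htt' : t ≤ t') : ReflTransGen r (f t) (f t') := by
  induction t' using Nat.strong_induction_on with
  | _ t' ih =>
    rcases htt'.eq_or_lt with rfl | hlt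
    · exact .refl
    set m := sSup {s ∈ S | s < t'}
    have hbdd : BddAbove {s ∈ S | s < t'} := ⟨t', fun s hs => hs.2.le⟩
    have hm : m ∈ S ∧ m < t' := Nat.sSup_mem (s := {s ∈ S | s < t'}) ⟨t, ht, hlt⟩ hbdd
    have hle_m : ∀ s ∈ S, s < t' → s ≤ m := fun s hs hst => le_csSup hbdd ⟨hs, hst⟩
    refine (ih m hm.2 hm.1 (hle_m t ht hlt)).tail (h m hm.1 t' ht' hm.2 fun s hs => ?_)
    exact (lt_or_ge s t').imp (hle_m s hs) id

section

variable {V : Type*} {E : Finset (V × V × ℕ × ℕ)}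

theorem GEdge.reflTransGen_inn {v : V} {t t' : ℕ} (ht : t ∈ Tin E v) (ht' : t' ∈ Tin E v)
    (htt' : t ≤ t') : ReflTransGen (GEdge E) (.inn v t) (.inn v t') :=
  reflTransGen_of_consecutive (fun _ hs _ hs' hlt hcons => .in_in hs hs' hlt hcons) ht ht' htt'

theorem GEdge.reflTransGen_out {v : V} {t t' : ℕ} (ht : t ∈ Tout E v) (ht' : t' ∈ Tout E v)
    (htt' : t ≤ t') : ReflTransGen (GEdge E) (.out v t) (.out v t') :=
  reflTransGen_of_consecutive (fun _ hs _ hs' hlt hcons => .out_out hs hs' hlt hcons) ht ht' htt'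

theorem GEdge.reflTransGen_inn_out {v : V} {t s : ℕ} (ht : t ∈ Tin E v) (hs : s ∈ Tout E v)
    (hts : t ≤ s) : ReflTransGen (GEdge E) (.inn v t) (.out v s) := by
  set s₀ := sInf {x ∈ Tout E v | t ≤ x}
  have hs₀ : s₀ ∈ Tout E v ∧ t ≤ s₀ := Nat.sInf_mem (s := {x ∈ Tout E v | t ≤ x}) ⟨s, hs, hts⟩
  have hs₀_le : ∀ x ∈ Tout E v, t ≤ x → s₀ ≤ x := fun x hx htx => Nat.sInf_le ⟨hx, htx⟩
  have hbdd : BddAbove {x ∈ Tin E v | x ≤ s₀} := ⟨s₀, fun x hx => hx.2⟩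
  set t₀ := sSup {x ∈ Tin E v | x ≤ s₀}
  have ht₀ : t₀ ∈ Tin E v ∧ t₀ ≤ s₀ :=
    Nat.sSup_mem (s := {x ∈ Tin E v | x ≤ s₀}) ⟨t, ht, hs₀.2⟩ hbdd
  have le_t₀ : ∀ x ∈ Tin E v, x ≤ s₀ → x ≤ t₀ := fun x hx hxs => le_csSup hbdd ⟨hx, hxs⟩
  have htt₀ : t ≤ t₀ := le_t₀ t ht hs₀.2
  have hedge : GEdge E (.inn v t₀) (.out v s₀) :=
    .in_out ht₀.1 hs₀.1 ht₀.2 (fun x hx hx₀ => hs₀_le x hx (htt₀.trans hx₀)) le_t₀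
  exact ((reflTransGen_inn ht ht₀.1 htt₀).tail hedge).trans
    (reflTransGen_out hs₀.1 hs (hs₀_le s hs hts))

theorem startT_cons (e : V × V × ℕ × ℕ) (P : List (V × V × ℕ × ℕ)) :
    startT (e :: P) = e.2.2.1 := by
  simp [startT]

theorem endT_cons_of_ne_nil (e : V × V × ℕ × ℕ) {P : List (V × V × ℕ × ℕ)} (hP : P ≠ []) :
    endT (e :: P) = endT P := by
  obtain ⟨f, Q, rfl⟩ := List.exists_cons_of_ne_nil hP
  simp [endT, List.getLast?_cons_cons]

theorem isTempPath_iff {a b : V} {P : List (V × V × ℕ × ℕ)} :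
    IsTempPath E a b P ↔ P ≠ [] ∧ (∀ e ∈ P, e ∈ E) ∧ P.IsChain StepOK ∧
      (P.head?.map fun e => e.1) = some a ∧ (P.getLast?.map fun e => e.2.1) = some b :=
  Iff.rfl

theorem isTempPath_cons_iff {a b u v : V} {t l : ℕ} {P : List (V × V × ℕ × ℕ)} :
    IsTempPath E a b ((u, v, t, l) :: P) ↔ (u, v, t, l) ∈ E ∧ u = a ∧
      (P = [] ∧ v = b ∨ IsTempPath E v b P ∧ t + l ≤ startT P) := by
  cases P with
  | nil => simp [isTempPath_iff]
  | cons f Q =>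
    simp only [isTempPath_iff, List.forall_mem_cons, List.isChain_cons_cons, StepOK,
      List.head?_cons, List.getLast?_cons_cons, Option.map_some, Option.some.injEq, startT_cons]
    grind

theorem IsTempPath.startT_mem_Tout {a b : V} {P : List (V × V × ℕ × ℕ)}
    (hP : IsTempPath E a b P) : startT P ∈ Tout E a := by
  match P, hP with
  | (u, v, t, l) :: _, hP =>
    obtain ⟨he, rfl, -⟩ := isTempPath_cons_iff.1 hP
    exact ⟨v, l, he⟩

theorem IsTempPath.endT_mem_Tin {a b : V} {P : List (V × V × ℕ × ℕ)}
    (hP : IsTempPath E a b P) : endT P ∈ Tin E b := by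
  induction P generalizing a with
  | nil => exact absurd rfl hP.1
  | cons e Q ih =>
    obtain ⟨u, v, t, l⟩ := e
    rcases isTempPath_cons_iff.1 hP with ⟨he, -, ⟨rfl, rfl⟩ | ⟨hQ, -⟩⟩
    · exact ⟨u, t, l, he, rfl⟩
    · rw [endT_cons_of_ne_nil _ hQ.1]
      exact ih hQ

theorem IsTempPath.reflTransGen {a b : V} {P : List (V × V × ℕ × ℕ)}
    (hP : IsTempPath E a b P) :
    ReflTransGen (GEdge E) (.out a (startT P)) (.inn b (endT P)) := by
  induction P generalizing a with
  | nil => exact absurd rfl hP.1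
  | cons e Q ih =>
    obtain ⟨u, v, t, l⟩ := e
    rcases isTempPath_cons_iff.1 hP with ⟨he, rfl, ⟨rfl, rfl⟩ | ⟨hQ, hwait⟩⟩
    · exact .single (.cross he)
    · rw [startT_cons, endT_cons_of_ne_nil _ hQ.1]
      exact .head (.cross he) <|
        (GEdge.reflTransGen_inn_out ⟨u, t, l, he, rfl⟩ hQ.startT_mem_Tout hwait).trans (ih hQ)

/-- The first disjunct stands for the empty temporal path, which `IsTempPath` excludes. -/
def CanReach (E : Finset (V × V × ℕ × ℕ)) (b : V) (T : ℕ) (x : Copy V) : Prop :=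
  (∃ s ≤ T, x = .inn b s) ∨
    ∃ P, IsTempPath E x.base b P ∧ x.time ≤ startT P ∧ endT P ≤ T

theorem GEdge.canReach {b : V} {T : ℕ} {x y : Copy V} (hxy : GEdge E x y)
    (hy : CanReach E b T y) : CanReach E b T x := by
  cases hxy with
  | in_in _ _ hlt _ =>
    rcases hy with ⟨s, hsT, ⟨⟩⟩ | ⟨P, hP, hstart, hend⟩
    · exact .inl ⟨_, hlt.le.trans hsT, rfl⟩
    · exact .inr ⟨P, hP, hlt.le.trans hstart, hend⟩
  | out_out _ _ hlt _ =>
    rcases hy with ⟨s, -, ⟨⟩⟩ | ⟨P, hP, hstart, hend⟩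
    exact .inr ⟨P, hP, hlt.le.trans hstart, hend⟩
  | in_out _ _ hle _ _ =>
    rcases hy with ⟨s, -, ⟨⟩⟩ | ⟨P, hP, hstart, hend⟩
    exact .inr ⟨P, hP, hle.trans hstart, hend⟩
  | cross he =>
    rcases hy with ⟨s, hsT, ⟨⟩⟩ | ⟨P, hP, hwait, hend⟩
    · exact .inr ⟨_, isTempPath_cons_iff.2 ⟨he, rfl, .inl ⟨rfl, rfl⟩⟩, le_rfl, hsT⟩
    · refine .inr ⟨_, isTempPath_cons_iff.2 ⟨he, rfl, .inr ⟨hP, hwait⟩⟩, le_rfl, ?_⟩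
      rwa [endT_cons_of_ne_nil _ hP.1]

theorem canReach_of_reflTransGen {b : V} {T : ℕ} {x : Copy V}
    (h : ReflTransGen (GEdge E) x (.inn b T)) : CanReach E b T x := by
  induction h using ReflTransGen.head_induction_on with
  | refl => exact .inl ⟨T, le_rfl, rfl⟩
  | head hxy _ ih => exact hxy.canReach ih

end

theorem earliest_arrival_time_correct_general {V : Type*} (E : Finset (V × V × ℕ × ℕ))
    (a b : V) (ta tw : ℕ)
    (t0 : ℕ) (ht0 : t0 ∈ Tout E a) (ht0ge : ta ≤ t0)
    (ht0min : ∀ t ∈ Tout E a, ta ≤ t → t0 ≤ t) :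
    ((∃ P, IsTempPath E a b P ∧ ta ≤ startT P ∧ endT P ≤ tw) ↔
      {t' | t' ∈ Tin E b ∧ t' ≤ tw ∧
        Relation.ReflTransGen (GEdge E) (.out a t0) (.inn b t')}.Nonempty) ∧
    ((∃ P, IsTempPath E a b P ∧ ta ≤ startT P ∧ endT P ≤ tw) →
      sInf {n | ∃ P, (IsTempPath E a b P ∧ ta ≤ startT P ∧ endT P ≤ tw) ∧ endT P = n} =
      sInf {t' | t' ∈ Tin E b ∧ t' ≤ tw ∧
        Relation.ReflTransGen (GEdge E) (.out a t0) (.inn b t')}) := by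
  set R := {t' | t' ∈ Tin E b ∧ t' ≤ tw ∧ ReflTransGen (GEdge E) (.out a t0) (.inn b t')}
  have endT_mem : ∀ P, (IsTempPath E a b P ∧ ta ≤ startT P ∧ endT P ≤ tw) → endT P ∈ R := by
    rintro P ⟨hP, hstart, hend⟩
    have ht0_le : t0 ≤ startT P := ht0min _ hP.startT_mem_Tout hstart
    exact ⟨hP.endT_mem_Tin, hend,
      (GEdge.reflTransGen_out ht0 hP.startT_mem_Tout ht0_le).trans hP.reflTransGen⟩
  have exists_endT_le : ∀ t' ∈ R,
      ∃ P, (IsTempPath E a b P ∧ ta ≤ startT P ∧ endT P ≤ tw) ∧ endT P ≤ t' := by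
    rintro t' ⟨-, htw, h⟩
    rcases canReach_of_reflTransGen h with ⟨s, -, ⟨⟩⟩ | ⟨P, hP, hstart, hend⟩
    exact ⟨P, ⟨hP, ht0ge.trans hstart, hend.trans htw⟩, hend⟩
  refine ⟨⟨fun ⟨P, hP⟩ => ⟨_, endT_mem P hP⟩, fun ⟨t', ht'⟩ => ?_⟩,
    fun _ => csInf_eq_csInf_of_forall_exists_le ?_ ?_⟩
  · exact (exists_endT_le t' ht').imp fun _ hP => hP.1
  · rintro _ ⟨P, hP, rfl⟩
    exact ⟨_, endT_mem P hP, le_rfl⟩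
  · intro t' ht'
    obtain ⟨P, hP, hle⟩ := exists_endT_le t' ht'
    exact ⟨_, ⟨P, hP, rfl⟩, hle⟩

theorem earliest_arrival_time_correct {V : Type*} (E : Finset (V × V × ℕ × ℕ))
    (a b : V) (ta tw : ℕ) (htatw : ta ≤ tw)
    (t0 : ℕ) (ht0 : t0 ∈ Tout E a) (ht0ge : ta ≤ t0)
    (ht0min : ∀ t ∈ Tout E a, ta ≤ t → t0 ≤ t) :
    ((∃ P, IsTempPath E a b P ∧ ta ≤ startT P ∧ endT P ≤ tw) ↔
      {t' | t' ∈ Tin E b ∧ t' ≤ tw ∧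
        Relation.ReflTransGen (GEdge E) (.out a t0) (.inn b t')}.Nonempty) ∧
    ((∃ P, IsTempPath E a b P ∧ ta ≤ startT P ∧ endT P ≤ tw) →
      sInf {n | ∃ P, (IsTempPath E a b P ∧ ta ≤ startT P ∧ endT P ≤ tw) ∧ endT P = n} =
      sInf {t' | t' ∈ Tin E b ∧ t' ≤ tw ∧
        Relation.ReflTransGen (GEdge E) (.out a t0) (.inn b t')}) :=
  earliest_arrival_time_correct_general E a b ta tw t0 ht0 ht0ge ht0min
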